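/- arXiv:1705.02778 — 4 statements merged into one kernel-verified Lean document; each statement's English description precedes it below -/
import Mathlib

section
/- Let R be a unital non-associative ring, G a monoid, and π a strong G-derivation on R (i.e. (D0)–(D4) hold and additionally (D7) or (D8) holds). Then: (a) R^G is a unital subring of R (it contains 1, and is closed under subtraction and multiplication); (b) Z(R)^G := Z(R) ∩ R^G is a commutative unital subring of R. -/
open scoped Classical

/-! Common framework: Ore monoid rings `R[G;π]` over a unital non-associative ring `R`
and a monoid `G`.  A `G`-derivation `π = {π^a_b}` is encoded as a map
`π : G → R → (G →₀ R)`, where `π a r b = π^a_b(r)`; axiom (D0) (finite support in `b`)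
is built into the `Finsupp` encoding.  The Ore monoid ring `S = R[G;π]` is the
additive group `G →₀ R` of finitely supported formal sums `Σ r_a xᵃ`
(with `Finsupp.single a r` representing `r xᵃ`), equipped with the
multiplication `GDeriv.mul` below. -/

/-- A two-sided ideal with respect to a (possibly non-associative, non-unital)
multiplication `m` on an additive group `A`. -/
structure IsIdealWith {A : Type*} [AddCommGroup A] (m : A → A → A) (J : Set A) : Prop where
  zero_mem : (0 : A) ∈ J
  add_mem : ∀ {x y : A}, x ∈ J → y ∈ J → x + y ∈ J
  neg_mem : ∀ {x : A}, x ∈ J → -x ∈ J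
  mul_mem_left : ∀ (r : A) {x : A}, x ∈ J → m r x ∈ J
  mul_mem_right : ∀ {x : A} (r : A), x ∈ J → m x r ∈ J

/-- The subset `F` of `A` is a field with respect to the multiplication `m` with
identity `one`: it is a commutative unital subring in which every nonzero element
has a multiplicative inverse. -/
def IsFieldWith {A : Type*} [AddCommGroup A] (m : A → A → A) (one : A) (F : Set A) : Prop :=
  one ∈ F ∧ (∀ x ∈ F, ∀ y ∈ F, x + y ∈ F) ∧ (∀ x ∈ F, -x ∈ F) ∧
  (∀ x ∈ F, ∀ y ∈ F, m x y ∈ F) ∧ (∀ x ∈ F, ∀ y ∈ F, m x y = m y x) ∧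
  (∀ x ∈ F, x ≠ 0 → ∃ y ∈ F, m x y = one ∧ m y x = one)

/-- A `G`-derivation on `R`: axioms (D0)–(D4).  Here `π a r b` denotes `π^a_b(r)`,
and (D0) holds by the finite support of `π a r : G →₀ R`. -/
structure GDeriv (R : Type*) [NonAssocRing R] (G : Type*) [Monoid G] where
  /-- the family of maps; `π a r b = π^a_b(r)` -/
  π : G → R → (G →₀ R)
  /-- (D1): `π^e_e = id` and `π^e_a = 0` for `a ≠ e` -/
  d1 : ∀ r : R, π 1 r = Finsupp.single 1 r
  /-- (D2): `π^a_b(1) = δ_{a,b}` -/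
  d2 : ∀ a : G, π a (1 : R) = Finsupp.single a (1 : R)
  /-- (D3): each `π^a_b` is additive -/
  d3 : ∀ (a : G) (r s : R), π a (r + s) = π a r + π a s
  /-- (D4): `π^{ab}_c = Σ_{df = c} π^a_d ∘ π^b_f` -/
  d4 : ∀ (a b : G) (r : R),
    π (a * b) r = (π b r).sum fun f s => (π a s).sum fun d t => Finsupp.single (d * f) t

namespace GDeriv

variable {R : Type*} [NonAssocRing R] {G : Type*} [Monoid G] (P : GDeriv R G)

/-- The multiplication of the Ore monoid ring `S = R[G;π]` on `G →₀ R`: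
the biadditive extension of `(r xᵃ)(s xᵇ) = Σ_c r π^a_c(s) x^{cb}`. -/
noncomputable def mul (u v : G →₀ R) : G →₀ R :=
  u.sum fun a r => v.sum fun b s => (P.π a s).sum fun c t => Finsupp.single (c * b) (r * t)

/-- The multiplicative identity `1·xᵉ` of `S`. -/
noncomputable def one (_P : GDeriv R G) : G →₀ R := Finsupp.single 1 1

/-- `R^G = {r ∈ R : π^a_b(r) = δ_{a,b} r}`. -/
def fixed : Set R := {r | ∀ a : G, P.π a r = Finsupp.single a r}

/-- `S^G = Σ_a R^G xᵃ`, the elements of `S` all of whose coefficients lie in `R^G`. -/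
def fixedS : Set (G →₀ R) := {u | ∀ c : G, u c ∈ P.fixed}

/-- (D7): every `π^a_b` is left `R^G`-linear. -/
def LeftLinear : Prop := ∀ a b : G, ∀ s ∈ P.fixed, ∀ r : R, P.π a (s * r) b = s * P.π a r b

/-- (D8): every `π^a_b` is right `R^G`-linear. -/
def RightLinear : Prop := ∀ a b : G, ∀ r : R, ∀ s ∈ P.fixed, P.π a (r * s) b = P.π a r b * s

/-- `π` is strong if (D7) or (D8) holds. -/
def Strong : Prop := P.LeftLinear ∨ P.RightLinear

/-- (D6): `π^a_a = id_R` for all `a ∈ G` (i.e. `π` is unital). -/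
def Unital : Prop := ∀ (a : G) (r : R), P.π a r a = r

/-- `π` is commutative: `π^a_b ∘ π^c_d = π^c_d ∘ π^a_b`. -/
def Commutes : Prop := ∀ (a b c d : G) (r : R), P.π a (P.π c r d) b = P.π c (P.π a r b) d

/-- `π` is well-ordered: there is a well-order on `G` whose strict part `lt`
satisfies `π^a_b = 0` whenever `a ≺ b`. -/
def WellOrdered : Prop :=
  ∃ lt : G → G → Prop, IsWellOrder G lt ∧ ∀ a b : G, lt a b → ∀ r : R, P.π a r b = 0

/-- The extension `π̃^a_b : S → S`, `π̃^a_b(Σ_c r_c x^c) = Σ_c π^a_b(r_c) x^c`. -/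
noncomputable def ext (a b : G) (u : G →₀ R) : G →₀ R := u.sum fun c r => Finsupp.single c (P.π a r b)

/-- The commutator `[u,v] = uv - vu` in `S`. -/
noncomputable def commS (u v : G →₀ R) : G →₀ R := P.mul u v - P.mul v u

/-- The associator `(u,v,w) = (uv)w - u(vw)` in `S`. -/
noncomputable def assocS (u v w : G →₀ R) : G →₀ R := P.mul (P.mul u v) w - P.mul u (P.mul v w)

/-- The left nucleus `N_l(S)`. -/
def Nl : Set (G →₀ R) := {u | ∀ v w, P.assocS u v w = 0}

/-- The middle nucleus `N_m(S)`. -/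
def Nm : Set (G →₀ R) := {u | ∀ v w, P.assocS v u w = 0}

/-- The right nucleus `N_r(S)`. -/
def Nr : Set (G →₀ R) := {u | ∀ v w, P.assocS v w u = 0}

/-- The commuter `C(S)`. -/
def CS : Set (G →₀ R) := {u | ∀ v, P.mul u v = P.mul v u}

/-- The center `Z(S) = C(S) ∩ N_l(S) ∩ N_m(S) ∩ N_r(S)`. -/
def Z : Set (G →₀ R) := P.CS ∩ (P.Nl ∩ P.Nm ∩ P.Nr)

/-- `Z(S)^G = {s ∈ Z(S) : π̃^a_b(s) = δ_{a,b} s}`. -/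
def ZG : Set (G →₀ R) :=
  {s | s ∈ P.Z ∧ ∀ a b : G, P.ext a b s = if a = b then s else 0}

/-- `R` is `G`-simple: `{0}` and `R` are the only `G`-invariant ideals of `R`. -/
def RSimple : Prop :=
  ∀ J : Set R, IsIdealWith (· * ·) J → (∀ a b : G, ∀ r ∈ J, P.π a r b ∈ J) →
    J = {0} ∨ J = Set.univ

/-- `S` is `G`-simple: `{0}` and `S` are the only ideals of `S` invariant under all `π̃^a_b`. -/
def SSimple : Prop :=
  ∀ J : Set (G →₀ R), IsIdealWith P.mul J → (∀ a b : G, ∀ u ∈ J, P.ext a b u ∈ J) →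
    J = {0} ∨ J = Set.univ

end GDeriv


namespace GDeriv
variable {R : Type*} [NonAssocRing R] {G : Type*} [Monoid G] (P : GDeriv R G)

lemma pi_zero (a : G) : P.π a (0 : R) = 0 := by
  have h := P.d3 a 0 0
  simpa using h.symm

lemma pi_sub (a : G) (r s : R) : P.π a (r - s) = P.π a r - P.π a s := by
  have h := P.d3 a (r - s) s
  simp only [sub_add_cancel] at h
  exact eq_sub_of_add_eq h.symm

lemma one_mem_fixed : (1 : R) ∈ P.fixed := fun a => P.d2 a

lemma sub_mem_fixed {x y : R} (hx : x ∈ P.fixed) (hy : y ∈ P.fixed) :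
    x - y ∈ P.fixed := by
  intro a
  rw [P.pi_sub, hx a, hy a, Finsupp.single_sub]

lemma mul_mem_fixed (hP : P.Strong) {x y : R} (hx : x ∈ P.fixed) (hy : y ∈ P.fixed) :
    x * y ∈ P.fixed := by
  intro a
  ext b
  rcases hP with h | h
  · rw [h a b x hx y, hy a, Finsupp.single_apply, Finsupp.single_apply]
    split <;> simp
  · rw [h a b x y hy, hx a, Finsupp.single_apply, Finsupp.single_apply]
    split <;> simp

end GDeriv
/-- If `π` is a strong `G`-derivation on `R`, then (a) `R^G` is a
unital subring of `R` (contains `1`, closed under subtraction and multiplication),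
and (b) `Z(R)^G = Z(R) ∩ R^G` is a commutative unital subring of `R`. -/
theorem stmt0 {R : Type*} [NonAssocRing R] {G : Type*} [Monoid G]
    (P : GDeriv R G) (hP : P.Strong) :
    ((1 : R) ∈ P.fixed ∧
      (∀ x ∈ P.fixed, ∀ y ∈ P.fixed, x - y ∈ P.fixed) ∧
      (∀ x ∈ P.fixed, ∀ y ∈ P.fixed, x * y ∈ P.fixed)) ∧
    ((1 : R) ∈ Set.center R ∩ P.fixed ∧
      (∀ x ∈ Set.center R ∩ P.fixed, ∀ y ∈ Set.center R ∩ P.fixed,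
        x - y ∈ Set.center R ∩ P.fixed) ∧
      (∀ x ∈ Set.center R ∩ P.fixed, ∀ y ∈ Set.center R ∩ P.fixed,
        x * y ∈ Set.center R ∩ P.fixed) ∧
      (∀ x ∈ Set.center R ∩ P.fixed, ∀ y ∈ Set.center R ∩ P.fixed, x * y = y * x)) := by
  have hsub : ∀ x ∈ P.fixed, ∀ y ∈ P.fixed, x - y ∈ P.fixed :=
    fun x hx y hy => P.sub_mem_fixed hx hy
  have hmul : ∀ x ∈ P.fixed, ∀ y ∈ P.fixed, x * y ∈ P.fixed :=
    fun x hx y hy => P.mul_mem_fixed hP hx hy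
  refine ⟨⟨P.one_mem_fixed, hsub, hmul⟩,
    ⟨Set.one_mem_center, P.one_mem_fixed⟩, ?_, ?_, ?_⟩
  · rintro x ⟨hxc, hxf⟩ y ⟨hyc, hyf⟩
    refine ⟨?_, hsub x hxf y hyf⟩
    rw [sub_eq_add_neg]
    exact Set.add_mem_center hxc (Set.neg_mem_center hyc)
  · rintro x ⟨hxc, hxf⟩ y ⟨hyc, hyf⟩
    exact ⟨Set.mul_mem_center hxc hyc, hmul x hxf y hyf⟩
  · rintro x ⟨hxc, _⟩ y _
    exact hxc.comm y
end

section
/- Let R be a unital non-associative ring, G a commutative monoid, π a G-derivation on R, and S = R[G;π] the Ore monoid ring. If s ∈ S^G, then for every u ∈ S the commutator [s,u] lies in the additive subgroup of S generated by the products [s,r]·t with r ∈ R (embedded in S as r x^e) and t ∈ S. In particular, if [s,r] = 0 for all r ∈ R, then s belongs to the commuter C(S). -/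
open scoped Classical

/-! Since the coefficients `t` of `s ∈ S^G` are fixed by every `π^a_b`, we have
`(r xᵇ)(t xᵃ) = (r t) x^{ba}`, whereas `(t xᵃ)(r xᵇ) = ((t xᵃ) r) xᵇ` holds for any `t`.
As `G` is commutative, `[s, r xᵇ] = [s, r] xᵇ`, and `[s, -]` is additive. -/

namespace GDeriv

section Monoid

variable {R : Type*} [NonAssocRing R] {G : Type*} [Monoid G] (P : GDeriv R G)

lemma π_zero (a : G) : P.π a 0 = 0 :=
  (AddMonoidHom.mk' (P.π a) (P.d3 a)).map_zero

lemma mul_zero_left (v : G →₀ R) : P.mul 0 v = 0 :=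
  Finsupp.sum_zero_index

lemma mul_zero_right (u : G →₀ R) : P.mul u 0 = 0 := by
  simp only [mul, Finsupp.sum_zero_index, Finsupp.sum_fun_zero]

lemma mul_add_left (u u' v : G →₀ R) : P.mul (u + u') v = P.mul u v + P.mul u' v := by
  refine Finsupp.sum_add_index' (fun a => ?_) fun a r r' => ?_
  · simp only [zero_mul, Finsupp.single_zero, Finsupp.sum_fun_zero]
  · simp only [add_mul, Finsupp.single_add, Finsupp.sum_add]

lemma mul_add_right (u v v' : G →₀ R) : P.mul u (v + v') = P.mul u v + P.mul u v' := by
  rw [mul, mul, mul, ← Finsupp.sum_add]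
  refine Finsupp.sum_congr fun a _ => Finsupp.sum_add_index' (fun b => ?_) fun b t t' => ?_
  · rw [P.π_zero, Finsupp.sum_zero_index]
  · rw [P.d3]
    refine Finsupp.sum_add_index' (fun c => ?_) fun c x y => ?_
    · rw [mul_zero, Finsupp.single_zero]
    · rw [mul_add, Finsupp.single_add]

lemma mul_single_one (w : G →₀ R) (b : G) :
    P.mul w (Finsupp.single b 1) = Finsupp.mapDomain (· * b) w := by
  refine Finsupp.sum_congr fun a _ => ?_
  rw [Finsupp.sum_single_index, P.d2, Finsupp.sum_single_index, mul_one]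
  · rw [mul_zero, Finsupp.single_zero]
  · rw [P.π_zero, Finsupp.sum_zero_index]

lemma mul_single (u : G →₀ R) (b : G) (r : R) :
    P.mul u (Finsupp.single b r) = Finsupp.mapDomain (· * b) (P.mul u (Finsupp.single 1 r)) := by
  simp only [mul, Finsupp.mapDomain_sum, Finsupp.mapDomain_single]
  refine Finsupp.sum_congr fun a _ => ?_
  rw [Finsupp.sum_single_index, Finsupp.sum_single_index]
  · simp only [mul_one]
  all_goals rw [P.π_zero, Finsupp.sum_zero_index]

lemma single_mul_of_mem_fixedS {s : G →₀ R} (hs : s ∈ P.fixedS) (b : G) (r : R) :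
    P.mul (Finsupp.single b r) s = Finsupp.mapDomain (b * ·) (P.mul (Finsupp.single 1 r) s) := by
  simp only [mul, Finsupp.mapDomain_sum, Finsupp.mapDomain_single]
  rw [Finsupp.sum_single_index, Finsupp.sum_single_index]
  · refine Finsupp.sum_congr fun a _ => ?_
    rw [hs a, P.d1, Finsupp.sum_single_index, Finsupp.sum_single_index, one_mul]
    all_goals rw [mul_zero, Finsupp.single_zero]
  all_goals simp only [zero_mul, Finsupp.single_zero, Finsupp.sum_fun_zero]

end Monoid

section CommMonoid

variable {R : Type*} [NonAssocRing R] {G : Type*} [CommMonoid G] (P : GDeriv R G)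

lemma commS_add_right (s u v : G →₀ R) :
    P.commS s (u + v) = P.commS s u + P.commS s v := by
  simp only [commS, P.mul_add_left, P.mul_add_right]
  abel

lemma commS_single_of_mem_fixedS {s : G →₀ R} (hs : s ∈ P.fixedS) (b : G) (r : R) :
    P.commS s (Finsupp.single b r)
      = P.mul (P.commS s (Finsupp.single 1 r)) (Finsupp.single b 1) := by
  simp only [commS, mul_single_one, P.mul_single s b r, P.single_mul_of_mem_fixedS hs b r,
    mul_comm b, Finsupp.mapDomain_sub]

lemma commS_mem_closure_of_mem_fixedS {s : G →₀ R} (hs : s ∈ P.fixedS) (u : G →₀ R) :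
    P.commS s u ∈ AddSubgroup.closure
      {z | ∃ (r : R) (t : G →₀ R), z = P.mul (P.commS s (Finsupp.single 1 r)) t} := by
  induction u using Finsupp.induction_linear with
  | zero =>
    rw [commS, mul_zero_left, mul_zero_right, sub_zero]
    exact zero_mem _
  | add u v hu hv =>
    rw [commS_add_right]
    exact add_mem hu hv
  | single b r =>
    rw [P.commS_single_of_mem_fixedS hs]
    exact AddSubgroup.subset_closure ⟨r, _, rfl⟩

lemma mem_CS_of_commS_single_eq_zero {s : G →₀ R} (hs : s ∈ P.fixedS)
    (hR : ∀ r : R, P.commS s (Finsupp.single 1 r) = 0) : s ∈ P.CS := by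
  refine fun v => sub_eq_zero.mp ?_
  have hgen : {z | ∃ (r : R) (t : G →₀ R), z = P.mul (P.commS s (Finsupp.single 1 r)) t}
      ⊆ (⊥ : AddSubgroup (G →₀ R)) := by
    rintro _ ⟨r, t, rfl⟩
    rw [hR, mul_zero_left]
    exact zero_mem _
  exact (AddSubgroup.closure_le _).mpr hgen (P.commS_mem_closure_of_mem_fixedS hs v)

end CommMonoid

end GDeriv

/-- If `G` is commutative and `s ∈ S^G`, then for every `u ∈ S` the
commutator `[s,u]` lies in the additive subgroup of `S` generated by the products
`[s,r]·t` with `r ∈ R` (embedded as `r xᵉ`) and `t ∈ S`.  In particular, if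
`[s,r] = 0` for all `r ∈ R`, then `s ∈ C(S)`. -/
theorem stmt3 {R : Type*} [NonAssocRing R] {G : Type*} [CommMonoid G]
    (P : GDeriv R G) {s : G →₀ R} (hs : s ∈ P.fixedS) :
    (∀ u : G →₀ R, P.commS s u ∈ AddSubgroup.closure
      {z : G →₀ R | ∃ (r : R) (t : G →₀ R),
        z = P.mul (P.commS s (Finsupp.single 1 r)) t}) ∧
    ((∀ r : R, P.commS s (Finsupp.single 1 r) = 0) → s ∈ P.CS) :=
  ⟨P.commS_mem_closure_of_mem_fixedS hs, P.mem_CS_of_commS_single_eq_zero hs⟩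
end

section
/- Let R be a unital non-associative ring, G a commutative monoid, π a G-derivation on R, and S = R[G;π] the Ore monoid ring. Then: (a) condition (D7) holds if and only if the associator (x^a, s, r) = 0 in S for every a ∈ G, s ∈ S^G and r ∈ R; (b) condition (D8) holds if and only if the associator (x^a, r, s) = 0 in S for every a ∈ G, r ∈ R and s ∈ S^G. -/
open scoped Classical

namespace GDeriv

variable {R : Type*} [NonAssocRing R] {G : Type*} [Monoid G] (P : GDeriv R G)

lemma zero_mem_fixed : (0 : R) ∈ P.fixed := fun a => by
  rw [P.pi_zero, Finsupp.single_zero]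

lemma mul_single_left (a : G) (r : R) (v : G →₀ R) :
    P.mul (Finsupp.single a r) v =
      v.sum fun b s => (P.π a s).sum fun c t => Finsupp.single (c * b) (r * t) := by
  unfold mul
  rw [Finsupp.sum_single_index]
  simp

lemma mul_single_right (u : G →₀ R) (b : G) (s : R) :
    P.mul u (Finsupp.single b s) =
      u.sum fun a r => (P.π a s).sum fun c t => Finsupp.single (c * b) (r * t) := by
  unfold mul
  refine Finsupp.sum_congr fun a _ => ?_
  rw [Finsupp.sum_single_index]
  rw [P.pi_zero]
  simp

lemma mul_single_single (a b : G) (r s : R) :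
    P.mul (Finsupp.single a r) (Finsupp.single b s) =
      (P.π a s).sum fun c t => Finsupp.single (c * b) (r * t) := by
  rw [P.mul_single_left, Finsupp.sum_single_index]
  rw [P.pi_zero]
  simp

end GDeriv

/-- If `G` is commutative, then (a) (D7) holds iff
`(xᵃ, s, r) = 0` for all `a ∈ G`, `s ∈ S^G`, `r ∈ R`; and (b) (D8) holds iff
`(xᵃ, r, s) = 0` for all `a ∈ G`, `r ∈ R`, `s ∈ S^G`. -/
theorem stmt4 {R : Type*} [NonAssocRing R] {G : Type*} [CommMonoid G]
    (P : GDeriv R G) :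
    (P.LeftLinear ↔ ∀ a : G, ∀ s ∈ P.fixedS, ∀ r : R,
      P.assocS (Finsupp.single a (1 : R)) s (Finsupp.single 1 r) = 0) ∧
    (P.RightLinear ↔ ∀ a : G, ∀ r : R, ∀ s ∈ P.fixedS,
      P.assocS (Finsupp.single a (1 : R)) (Finsupp.single 1 r) s = 0) := by
  classical
  have hz : ∀ (P : GDeriv R G) (a b' : G),
      (P.π a (0:R)).sum (fun c t => Finsupp.single (c * b') ((1:R) * t)) = 0 :=
    fun P a b' => by rw [P.pi_zero]; simp
  have hadd : ∀ (P : GDeriv R G) (a b' : G) (t1 t2 : R),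
      (P.π a (t1 + t2)).sum (fun c t => Finsupp.single (c * b') ((1:R) * t))
        = (P.π a t1).sum (fun c t => Finsupp.single (c * b') ((1:R) * t))
          + (P.π a t2).sum (fun c t => Finsupp.single (c * b') ((1:R) * t)) :=
    fun P a b' t1 t2 => by
      rw [P.d3, Finsupp.sum_add_index' (fun _ => by simp)
        (fun c u1 u2 => by rw [mul_add, Finsupp.single_add])]
  constructor
  · constructor
    · intro h7 a s hs r
      unfold GDeriv.assocS
      rw [sub_eq_zero]
      have hA : P.mul (Finsupp.single a (1:R)) s
          = s.sum fun b w => Finsupp.single (a * b) w := by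
        rw [P.mul_single_left]
        refine Finsupp.sum_congr fun b hb => ?_
        rw [hs b a, Finsupp.sum_single_index (by simp), one_mul]
      have hB : P.mul s (Finsupp.single (1:G) r)
          = s.sum fun b w => (P.π b r).sum fun f t => Finsupp.single (f * 1) (w * t) :=
        P.mul_single_right s 1 r
      have lhs : P.mul (P.mul (Finsupp.single a (1:R)) s) (Finsupp.single (1:G) r)
          = s.sum fun b w => (P.π b r).sum fun f t =>
              (P.π a t).sum fun c u => Finsupp.single (c * f) (w * u) := by
        rw [hA, P.mul_single_right,
          Finsupp.sum_sum_index (fun _ => by simp)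
            (fun c t1 t2 => by
              simp only [add_mul, Finsupp.single_add, Finsupp.sum_add])]
        refine Finsupp.sum_congr fun b hb => ?_
        rw [Finsupp.sum_single_index (by simp), P.d4 a b r,
          Finsupp.sum_sum_index (fun _ => by simp)
            (fun c t1 t2 => by
              simp only [mul_add, Finsupp.single_add, Finsupp.sum_add])]
        refine Finsupp.sum_congr fun f hf => ?_
        rw [Finsupp.sum_sum_index (fun _ => by simp)
            (fun c t1 t2 => by
              simp only [mul_add, Finsupp.single_add, Finsupp.sum_add])]
        refine Finsupp.sum_congr fun c hc => ?_
        rw [Finsupp.sum_single_index (by simp), mul_one]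
      have rhs : P.mul (Finsupp.single a (1:R)) (P.mul s (Finsupp.single (1:G) r))
          = s.sum fun b w => (P.π b r).sum fun f t =>
              (P.π a t).sum fun c u => Finsupp.single (c * f) (w * u) := by
        rw [hB, P.mul_single_left,
          Finsupp.sum_sum_index (hz P a) (hadd P a)]
        refine Finsupp.sum_congr fun b hb => ?_
        rw [Finsupp.sum_sum_index (hz P a) (hadd P a)]
        refine Finsupp.sum_congr fun f hf => ?_
        rw [Finsupp.sum_single_index (hz P a _)]
        have hmap : P.π a (s b * P.π b r f)
            = Finsupp.mapRange (fun x => s b * x) (mul_zero _) (P.π a (P.π b r f)) :=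
          Finsupp.ext fun c => by
            rw [Finsupp.mapRange_apply]; exact h7 a c (s b) (hs b) (P.π b r f)
        rw [hmap, Finsupp.sum_mapRange_index (by simp)]
        simp only [one_mul, mul_one]
      rw [lhs, rhs]
    · intro h a b w hw r
      have hsf : Finsupp.single (1:G) w ∈ P.fixedS := by
        intro c
        rw [Finsupp.single_apply]
        split
        · exact hw
        · exact P.zero_mem_fixed
      have H := h a (Finsupp.single 1 w) hsf r
      unfold GDeriv.assocS at H
      rw [sub_eq_zero] at H
      rw [P.mul_single_single a 1 1 w, hw a,
        Finsupp.sum_single_index (by simp)] at H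
      simp only [mul_one, one_mul] at H
      rw [P.mul_single_single a 1 w r] at H
      rw [P.mul_single_single 1 1 w r, P.d1 r,
        Finsupp.sum_single_index (by simp)] at H
      simp only [mul_one, one_mul] at H
      rw [P.mul_single_single a 1 1 (w * r)] at H
      simp only [mul_one, one_mul] at H
      rw [Finsupp.sum_single] at H
      have hb := congrArg (fun u : G →₀ R => u b) H
      simp only [Finsupp.sum_apply, Finsupp.single_apply] at hb
      rw [Finsupp.sum_ite_eq'] at hb
      by_cases hmem : b ∈ (P.π a r).support
      · rw [if_pos hmem] at hb
        exact hb.symm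
      · rw [if_neg hmem] at hb
        rw [Finsupp.notMem_support_iff.mp hmem, mul_zero, ← hb]
  · constructor
    · intro h8 a r s hs
      unfold GDeriv.assocS
      rw [sub_eq_zero]
      have hc : P.mul (Finsupp.single a (1:R)) (Finsupp.single (1:G) r) = P.π a r := by
        rw [P.mul_single_single]
        simp only [mul_one, one_mul]
        exact Finsupp.sum_single _
      have lhs : P.mul (P.mul (Finsupp.single a (1:R)) (Finsupp.single (1:G) r)) s
          = s.sum fun b w => (P.π a r).sum fun c t => Finsupp.single (c * b) (t * w) := by
        have hm : P.mul (P.π a r) s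
            = (P.π a r).sum fun c t => s.sum fun b w => Finsupp.single (c * b) (t * w) := by
          unfold GDeriv.mul
          refine Finsupp.sum_congr fun c hc' => ?_
          refine Finsupp.sum_congr fun b hb => ?_
          rw [hs b c, Finsupp.sum_single_index (by simp)]
        rw [hc, hm, Finsupp.sum_comm]
      have hD : P.mul (Finsupp.single (1:G) r) s
          = s.sum fun b w => Finsupp.single (1 * b) (r * w) := by
        rw [P.mul_single_left]
        refine Finsupp.sum_congr fun b hb => ?_
        rw [P.d1, Finsupp.sum_single_index (by simp)]
      have rhs : P.mul (Finsupp.single a (1:R)) (P.mul (Finsupp.single (1:G) r) s)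
          = s.sum fun b w => (P.π a r).sum fun c t => Finsupp.single (c * b) (t * w) := by
        rw [hD, P.mul_single_left,
          Finsupp.sum_sum_index (hz P a) (hadd P a)]
        refine Finsupp.sum_congr fun b hb => ?_
        rw [Finsupp.sum_single_index (hz P a _)]
        have hmap : P.π a (r * s b)
            = Finsupp.mapRange (fun x => x * s b) (zero_mul _) (P.π a r) :=
          Finsupp.ext fun c => by
            rw [Finsupp.mapRange_apply]; exact h8 a c r (s b) (hs b)
        rw [hmap, Finsupp.sum_mapRange_index (by simp)]
        simp only [one_mul]
      rw [lhs, rhs]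
    · intro h a b r w hw
      have hsf : Finsupp.single (1:G) w ∈ P.fixedS := by
        intro c
        rw [Finsupp.single_apply]
        split
        · exact hw
        · exact P.zero_mem_fixed
      have H := h a r (Finsupp.single 1 w) hsf
      unfold GDeriv.assocS at H
      rw [sub_eq_zero] at H
      have hc : P.mul (Finsupp.single a (1:R)) (Finsupp.single (1:G) r) = P.π a r := by
        rw [P.mul_single_single]
        simp only [mul_one, one_mul]
        exact Finsupp.sum_single _
      have hm : P.mul (P.π a r) (Finsupp.single (1:G) w)
          = (P.π a r).sum fun c t => Finsupp.single c (t * w) := by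
        rw [P.mul_single_right]
        refine Finsupp.sum_congr fun c hc' => ?_
        rw [hw c, Finsupp.sum_single_index (by simp), mul_one]
      rw [hc, hm] at H
      rw [P.mul_single_single 1 1 r w, P.d1 w,
        Finsupp.sum_single_index (by simp)] at H
      simp only [mul_one, one_mul] at H
      rw [P.mul_single_single a 1 1 (r * w)] at H
      simp only [mul_one, one_mul] at H
      rw [Finsupp.sum_single] at H
      have hb := congrArg (fun u : G →₀ R => u b) H
      simp only [Finsupp.sum_apply, Finsupp.single_apply] at hb
      rw [Finsupp.sum_ite_eq'] at hb
      by_cases hmem : b ∈ (P.π a r).support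
      · rw [if_pos hmem] at hb
        exact hb.symm
      · rw [if_neg hmem] at hb
        rw [Finsupp.notMem_support_iff.mp hmem, zero_mul, ← hb]
end

section
/- Let R be a unital non-associative ring, G a monoid, π a G-derivation on R, and S = R[G;π] the Ore monoid ring. If S is G-simple (with respect to the extended maps π̃^a_b), then R is G-simple. -/
open scoped Classical

/-- If `S = R[G;π]` is `G`-simple, then `R` is `G`-simple. -/
theorem stmt8 {R : Type*} [NonAssocRing R] {G : Type*} [Monoid G]
    (P : GDeriv R G) (h : P.SSimple) : P.RSimple := by
  intro J hJ hinv
  set J' : AddSubgroup R :=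
    { carrier := J
      zero_mem' := hJ.zero_mem
      add_mem' := fun hx hy => hJ.add_mem hx hy
      neg_mem' := fun hx => hJ.neg_mem hx } with hJ'
  set K : Set (G →₀ R) := {u | ∀ c : G, u c ∈ J} with hK
  have key : ∀ (u : G →₀ R) (f : G → R → (G →₀ R)) (c : G),
      (∀ a : G, (f a (u a)) c ∈ J) → (u.sum f) c ∈ J := by
    intro u f c hf
    rw [Finsupp.sum_apply, Finsupp.sum]
    exact AddSubgroup.sum_mem J' (fun a _ => hf a)
  have hKideal : IsIdealWith P.mul K :=
    { zero_mem := fun c => hJ.zero_mem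
      add_mem := fun hx hy c => hJ.add_mem (hx c) (hy c)
      neg_mem := fun hx c => hJ.neg_mem (hx c)
      mul_mem_left := by
        intro r x hx c
        unfold GDeriv.mul
        apply key; intro a
        apply key; intro b
        apply key; intro cc
        rw [Finsupp.single_apply]
        split
        · exact hJ.mul_mem_left _ (hinv a cc _ (hx b))
        · exact hJ.zero_mem
      mul_mem_right := by
        intro x r hx c
        unfold GDeriv.mul
        apply key; intro a
        apply key; intro b
        apply key; intro cc
        rw [Finsupp.single_apply]
        split
        · exact hJ.mul_mem_right _ (hx a)
        · exact hJ.zero_mem }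
  have hKinv : ∀ a b : G, ∀ u ∈ K, P.ext a b u ∈ K := by
    intro a b u hu c
    unfold GDeriv.ext
    apply key; intro c'
    rw [Finsupp.single_apply]
    split
    · exact hinv a b _ (hu c')
    · exact hJ.zero_mem
  have hsingle : ∀ r ∈ J, Finsupp.single (1 : G) r ∈ K := by
    intro r hr c
    rw [Finsupp.single_apply]
    split
    · exact hr
    · exact hJ.zero_mem
  rcases h K hKideal hKinv with h0 | huniv
  · left
    apply Set.eq_singleton_iff_unique_mem.mpr
    refine ⟨hJ.zero_mem, fun r hr => ?_⟩
    have : Finsupp.single (1 : G) r = 0 := by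
      have := hsingle r hr
      rw [h0] at this
      exact this
    simpa using (Finsupp.single_eq_zero.mp this)
  · right
    apply Set.eq_univ_iff_forall.mpr
    intro r
    have : (Finsupp.single (1 : G) r) ∈ K := by rw [huniv]; trivial
    simpa using this 1
end
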